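/- Let λ ∈ {1,-1}, ρ ∈ ℝ, let g₀ : [0,∞) → ℂ be continuous and set g₁(t) = ρ·g₀(t) (homogeneous Robin boundary condition). For t ≥ 0 and k ∈ ℂ let Q̃(t,k) be the 2×2 matrix built from (g₀(t), g₁(t)). Fix k ∈ ℂ with 2k ≠ iρ and 2k ≠ -iρ, and suppose Φ⁺, Φ⁻ : [0,∞) → M₂(ℂ) are differentiable matrix functions satisfying Φ⁺(0) = Φ⁻(0) = I and, for all t ≥ 0, (Φ⁺)'(t) = (-2ik²σ₃ + Q̃(t,k))Φ⁺(t) and (Φ⁻)'(t) = (-2ik²σ₃ + Q̃(t,-k))Φ⁻(t) (note (-k)² = k²). Then Φ⁻(t) = N(k) · Φ⁺(t) · N(k)⁻¹ for all t ≥ 0, where N(k) = diag(2k - iρ, -(2k + iρ)); in particular the diagonal entries of Φ⁺ and Φ⁻ coincide, and the (1,2)-entries satisfy Φ⁻₁₂(t) = -((2k - iρ)/(2k + iρ)) Φ⁺₁₂(t). -/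

import Mathlib

open Complex Matrix

attribute [local instance] Matrix.normedAddCommGroup Matrix.normedSpace

/-- The Pauli matrix `σ₃ = diag(1,-1)`. -/
def sigma3 : Matrix (Fin 2) (Fin 2) ℂ := !![1, 0; 0, -1]

/-- The matrix `Q̃(k)` built from boundary values `q`, `p`:
`Q̃(k) = [[iλ|q|², 2kq + ip], [-2kλ·conj(q) + iλ·conj(p), -iλ|q|²]]`. -/
noncomputable def Qtilde (lam q p k : ℂ) : Matrix (Fin 2) (Fin 2) ℂ :=
  !![Complex.I * lam * (‖q‖ : ℂ) ^ 2, 2 * k * q + Complex.I * p;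
     -2 * k * lam * (starRingEnd ℂ) q + Complex.I * lam * (starRingEnd ℂ) p,
     -(Complex.I * lam * (‖q‖ : ℂ) ^ 2)]

/-- The symmetry matrix `N(k) = diag(2k - iρ, -(2k + iρ))` of the Robin problem. -/
noncomputable def robinN (ρ : ℝ) (k : ℂ) : Matrix (Fin 2) (Fin 2) ℂ :=
  !![2 * k - Complex.I * (ρ : ℂ), 0; 0, -(2 * k + Complex.I * (ρ : ℂ))]

/-!
The Robin condition `p = ρ q` makes `N(k)` intertwine the t-part coefficients at `k` and `-k`:
`N(k) (-2ik²σ₃ + Q̃(t,k)) = (-2ik²σ₃ + Q̃(t,-k)) N(k)`. Hence `N Φ⁺ N⁻¹` solves the linear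
equation satisfied by `Φ⁻`, with the same initial value `I`, and uniqueness for linear ODEs with
continuous coefficients (Grönwall) gives `Φ⁻ = N Φ⁺ N⁻¹`. As `N(k)` is diagonal, the entries of
`N Φ⁺ N⁻¹` are `N_ii Φ⁺_ij / N_jj`.
-/

theorem eqOn_Icc_of_hasDerivWithinAt_linear {E : Type*} [NormedAddCommGroup E] [NormedSpace ℝ E]
    {A : ℝ → E →L[ℝ] E} {x y : ℝ → E} {a b : ℝ} (hA : ContinuousOn A (Set.Icc a b))
    (hx : ContinuousOn x (Set.Icc a b))
    (hx' : ∀ t ∈ Set.Ico a b, HasDerivWithinAt x (A t (x t)) (Set.Ici t) t)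
    (hy : ContinuousOn y (Set.Icc a b))
    (hy' : ∀ t ∈ Set.Ico a b, HasDerivWithinAt y (A t (y t)) (Set.Ici t) t)
    (ha : x a = y a) : Set.EqOn x y (Set.Icc a b) := by
  obtain ⟨C, hC⟩ := isCompact_Icc.exists_bound_of_continuousOn hA
  have hbound : ∀ s ∈ Set.Ico a b, ‖A s (x s) - A s (y s)‖ ≤ C * ‖(x - y) s‖ := fun s hs =>
    calc ‖A s (x s) - A s (y s)‖ = ‖A s (x s - y s)‖ := by rw [map_sub]
      _ ≤ ‖A s‖ * ‖x s - y s‖ := (A s).le_opNorm _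
      _ ≤ C * ‖x s - y s‖ := by gcongr; exact hC s (Set.Ico_subset_Icc_self hs)
  exact fun t ht => sub_eq_zero.mp <| eq_zero_of_abs_deriv_le_mul_abs_self_of_eq_zero_right
    (hx.sub hy) (fun s hs => (hx' s hs).sub (hy' s hs)) (sub_eq_zero.mpr ha) hbound t ht

section MatrixODE

variable {n 𝕜 : Type*} [Fintype n] [DecidableEq n] [RCLike 𝕜]

noncomputable def Matrix.mulLeftCLM : Matrix n n 𝕜 →L[ℝ] Matrix n n 𝕜 →L[ℝ] Matrix n n 𝕜 :=
  LinearMap.toContinuousLinearMap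
    (LinearMap.toContinuousLinearMap.toLinearMap ∘ₗ LinearMap.mul ℝ (Matrix n n 𝕜))

theorem Matrix.eqOn_Ici_of_hasDerivAt_mul {M X Y : ℝ → Matrix n n 𝕜} {a : ℝ}
    (hM : ContinuousOn M (Set.Ici a))
    (hX : ∀ t, a ≤ t → HasDerivAt X (M t * X t) t)
    (hY : ∀ t, a ≤ t → HasDerivAt Y (M t * Y t) t)
    (ha : X a = Y a) : Set.EqOn X Y (Set.Ici a) := by
  intro t (ht : a ≤ t)
  refine eqOn_Icc_of_hasDerivWithinAt_linear (A := fun s => Matrix.mulLeftCLM (M s))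
    ((Matrix.mulLeftCLM (n := n) (𝕜 := 𝕜)).continuous.comp_continuousOn
      (hM.mono Set.Icc_subset_Ici_self))
    (fun s hs => (hX s hs.1).continuousAt.continuousWithinAt)
    (fun s hs => (hX s hs.1).hasDerivWithinAt)
    (fun s hs => (hY s hs.1).continuousAt.continuousWithinAt)
    (fun s hs => (hY s hs.1).hasDerivWithinAt) ha ⟨ht, le_rfl⟩

theorem HasDerivAt.const_mul_mul_const {X : ℝ → Matrix n n 𝕜} {X' : Matrix n n 𝕜} {t : ℝ}
    (h : HasDerivAt X X' t) (N P : Matrix n n 𝕜) :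
    HasDerivAt (fun s => N * X s * P) (N * X' * P) t :=
  (LinearMap.toContinuousLinearMap
    (LinearMap.mulRight ℝ P ∘ₗ LinearMap.mulLeft ℝ N)).hasFDerivAt.comp_hasDerivAt t h

theorem HasDerivAt.conj_of_mul_eq {X : ℝ → Matrix n n 𝕜} {M M' N : Matrix n n 𝕜} {t : ℝ}
    (hN : N * M = M' * N) (h : HasDerivAt X (M * X t) t) (P : Matrix n n 𝕜) :
    HasDerivAt (fun s => N * X s * P) (M' * (N * X t * P)) t := by
  simpa only [← mul_assoc, hN] using h.const_mul_mul_const N P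

end MatrixODE

theorem Matrix.diagonal_mul_mul_inv_diagonal_apply {n K : Type*} [Fintype n] [DecidableEq n]
    [Field K] {d : n → K} (hd : ∀ i, d i ≠ 0) (X : Matrix n n K) (i j : n) :
    (diagonal d * X * (diagonal d)⁻¹) i j = d i * X i j / d j := by
  have : (diagonal d)⁻¹ = diagonal fun i => (d i)⁻¹ :=
    inv_eq_right_inv (by rw [diagonal_mul_diagonal]; simp [hd])
  rw [this, mul_diagonal, diagonal_mul, div_eq_mul_inv]

/-- The coefficient `-2ik²σ₃ + Q̃(t,k)` of the t-part, with Robin data `p = ρ q`. -/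
noncomputable def robinLaxT (lam : ℂ) (ρ : ℝ) (q k : ℂ) : Matrix (Fin 2) (Fin 2) ℂ :=
  (-(2 * Complex.I * k ^ 2)) • sigma3 + Qtilde lam q ((ρ : ℂ) * q) k

theorem continuous_robinLaxT (lam : ℂ) (ρ : ℝ) (k : ℂ) :
    Continuous fun q => robinLaxT lam ρ q k := by
  refine continuous_matrix fun i j => ?_
  fin_cases i <;> fin_cases j <;> simp [robinLaxT, Qtilde, sigma3] <;> fun_prop

theorem robinN_mul_robinLaxT (lam : ℂ) (ρ : ℝ) (q k : ℂ) :
    robinN ρ k * robinLaxT lam ρ q k = robinLaxT lam ρ q (-k) * robinN ρ k := by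
  ext i j
  fin_cases i <;> fin_cases j <;>
    simp [Matrix.mul_apply, robinLaxT, sigma3, Qtilde, robinN] <;> ring

theorem robinN_eq_diagonal (ρ : ℝ) (k : ℂ) :
    robinN ρ k = diagonal ![2 * k - Complex.I * ρ, -(2 * k + Complex.I * ρ)] := by
  ext i j
  fin_cases i <;> fin_cases j <;> simp [robinN]

theorem robin_eigenfunction_symmetry_general
    (lam : ℂ) (ρ : ℝ)
    (g₀ : ℝ → ℂ) (hg₀ : ContinuousOn g₀ (Set.Ici 0))
    (k : ℂ) (hk1 : 2 * k ≠ Complex.I * (ρ : ℂ)) (hk2 : 2 * k ≠ -(Complex.I * (ρ : ℂ)))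
    (Φp Φm : ℝ → Matrix (Fin 2) (Fin 2) ℂ)
    (hΦp0 : Φp 0 = 1) (hΦm0 : Φm 0 = 1)
    (hΦp : ∀ t : ℝ, 0 ≤ t → HasDerivAt Φp
      (((-(2 * Complex.I * k ^ 2)) • sigma3 + Qtilde lam (g₀ t) ((ρ : ℂ) * g₀ t) k) * Φp t) t)
    (hΦm : ∀ t : ℝ, 0 ≤ t → HasDerivAt Φm
      (((-(2 * Complex.I * k ^ 2)) • sigma3 + Qtilde lam (g₀ t) ((ρ : ℂ) * g₀ t) (-k)) * Φm t) t) :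
    ∀ t : ℝ, 0 ≤ t →
      Φm t = robinN ρ k * Φp t * (robinN ρ k)⁻¹ ∧
      Φm t 0 0 = Φp t 0 0 ∧ Φm t 1 1 = Φp t 1 1 ∧
      Φm t 0 1 = -((2 * k - Complex.I * (ρ : ℂ)) / (2 * k + Complex.I * (ρ : ℂ))) * Φp t 0 1 := by
  have hminus : 2 * k - Complex.I * ρ ≠ 0 := sub_ne_zero.mpr hk1
  have hplus : 2 * k + Complex.I * ρ ≠ 0 := by rwa [← sub_neg_eq_add, sub_ne_zero]
  have hd : ∀ i, ![2 * k - Complex.I * ρ, -(2 * k + Complex.I * ρ)] i ≠ 0 :=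
    Fin.forall_fin_two.mpr ⟨hminus, neg_ne_zero.mpr hplus⟩
  have hΦm' (t : ℝ) (ht : 0 ≤ t) : HasDerivAt Φm (robinLaxT lam ρ (g₀ t) (-k) * Φm t) t := by
    rw [robinLaxT, neg_sq]; exact hΦm t ht
  have hconj : Set.EqOn Φm (fun t => robinN ρ k * Φp t * (robinN ρ k)⁻¹) (Set.Ici 0) := by
    refine Matrix.eqOn_Ici_of_hasDerivAt_mul (M := fun t => robinLaxT lam ρ (g₀ t) (-k))
      ((continuous_robinLaxT lam ρ (-k)).comp_continuousOn hg₀) hΦm'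
      (fun t ht => (hΦp t ht).conj_of_mul_eq (robinN_mul_robinLaxT lam ρ (g₀ t) k) _) ?_
    have hdet : IsUnit (robinN ρ k).det := by
      rw [robinN_eq_diagonal, Matrix.det_diagonal]
      exact (Finset.prod_ne_zero_iff.mpr fun i _ => hd i).isUnit
    rw [hΦm0, hΦp0, mul_one, Matrix.mul_nonsing_inv _ hdet]
  intro t ht
  have hΦt : Φm t = robinN ρ k * Φp t * (robinN ρ k)⁻¹ := hconj ht
  have hentry := Matrix.diagonal_mul_mul_inv_diagonal_apply hd (Φp t)
  rw [← robinN_eq_diagonal, ← hΦt] at hentry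
  refine ⟨hΦt, ?_, ?_, ?_⟩ <;>
    simp only [hentry, Matrix.cons_val_zero, Matrix.cons_val_one]
  · exact mul_div_cancel_left₀ _ hminus
  · exact mul_div_cancel_left₀ _ (neg_ne_zero.mpr hplus)
  · rw [div_neg]; ring

/-- For the homogeneous Robin condition `g₁ = ρ g₀`, the fundamental solutions of the t-part
of the Lax pair at spectral parameters `k` and `-k` are conjugate by `N(k)`:
`Φ⁻(t) = N(k) Φ⁺(t) N(k)⁻¹`; in particular the diagonal entries coincide and
`Φ⁻₁₂(t) = -((2k - iρ)/(2k + iρ)) Φ⁺₁₂(t)`. -/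
theorem robin_eigenfunction_symmetry
    (lam : ℂ) (hlam : lam = 1 ∨ lam = -1) (ρ : ℝ)
    (g₀ : ℝ → ℂ) (hg₀ : ContinuousOn g₀ (Set.Ici 0))
    (k : ℂ) (hk1 : 2 * k ≠ Complex.I * (ρ : ℂ)) (hk2 : 2 * k ≠ -(Complex.I * (ρ : ℂ)))
    (Φp Φm : ℝ → Matrix (Fin 2) (Fin 2) ℂ)
    (hΦp0 : Φp 0 = 1) (hΦm0 : Φm 0 = 1)
    (hΦp : ∀ t : ℝ, 0 ≤ t → HasDerivAt Φp
      (((-(2 * Complex.I * k ^ 2)) • sigma3 + Qtilde lam (g₀ t) ((ρ : ℂ) * g₀ t) k) * Φp t) t)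
    (hΦm : ∀ t : ℝ, 0 ≤ t → HasDerivAt Φm
      (((-(2 * Complex.I * k ^ 2)) • sigma3 + Qtilde lam (g₀ t) ((ρ : ℂ) * g₀ t) (-k)) * Φm t) t) :
    ∀ t : ℝ, 0 ≤ t →
      Φm t = robinN ρ k * Φp t * (robinN ρ k)⁻¹ ∧
      Φm t 0 0 = Φp t 0 0 ∧ Φm t 1 1 = Φp t 1 1 ∧
      Φm t 0 1 = -((2 * k - Complex.I * (ρ : ℂ)) / (2 * k + Complex.I * (ρ : ℂ))) * Φp t 0 1 :=
  robin_eigenfunction_symmetry_general lam ρ g₀ hg₀ k hk1 hk2 Φp Φm hΦp0 hΦm0 hΦp hΦm
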